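/- For every n ≥ 1 and every r with 0 ≤ r ≤ n, in the Laurent polynomial ring R one has Σ_{j=0}^{⌊r/2⌋} B(t^{n−r+1}, j) · E_{r−2j}(x) = Σ_{j=0}^{⌊r/2⌋} C_{n−r}(j) · m_{(1^{r−2j})}(x). (The common value of the two sides is the Koornwinder polynomial P_{(1^r)}(x | a,−a,c,−c | q,t) of type Cₙ with one-column diagram; the identity expresses its monomial expansion.) -/

import Mathlib

open Finset

noncomputable section

/-- The field `K = ℚ(a,c,t)`. -/
abbrev K : Type := FractionRing (MvPolynomial (Fin 3) ℚ)

def va : K := algebraMap (MvPolynomial (Fin 3) ℚ) K (MvPolynomial.X 0)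
def vc : K := algebraMap (MvPolynomial (Fin 3) ℚ) K (MvPolynomial.X 1)
def vt : K := algebraMap (MvPolynomial (Fin 3) ℚ) K (MvPolynomial.X 2)

/-- The q-Pochhammer symbol `(z;u)_k = ∏_{i=0}^{k-1} (1 - u^i z)`. -/
def poch (z u : K) (k : ℕ) : K := ∏ i ∈ range k, (1 - u ^ i * z)

/-- The coefficient `B(w,j)`. -/
def B (w : K) (j : ℕ) : K :=
  if j = 0 then 1 else
    (-1 : K) ^ j * w ^ (-(j : ℤ)) * poch (w ^ 2) (vt ^ 2) (j - 1) *
      (1 - w ^ 2 * vt ^ (4 * (j : ℤ) - 2)) * (poch (vt ^ 2) (vt ^ 2) j)⁻¹ *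
      ∑ k ∈ range (j + 1),
        (vt ^ (2 * k) * poch (-(w * va ^ 2)) (vt ^ 2) k * poch (-(w * vc ^ 2)) (vt ^ 2) k *
            poch (w ^ 2 * vt ^ (2 * (j : ℤ) - 2)) (vt ^ 2) k *
            poch (vt ^ (-(2 * (j : ℤ)))) (vt ^ 2) k) /
          (poch (vt ^ 2) (vt ^ 2) k * poch (-w) (vt ^ 2) k * poch (-(w * vt)) (vt ^ 2) k *
            poch (w ^ 2 * va ^ 2 * vc ^ 2 * vt⁻¹) (vt ^ 2) k)

/-- The coefficient `B̃(w,j)`. -/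
def Bt (w : K) (j : ℕ) : K :=
  (w * vt ^ ((j : ℤ) - 1)) ^ (-(j : ℤ)) * poch (w ^ 2 * vt ^ (2 * j)) (vt ^ 2) j *
    (poch (vt ^ 2) (vt ^ 2) j)⁻¹ *
    ∑ k ∈ range (j + 1),
      (vt ^ (2 * k) * poch (-(vt ^ (2 - 2 * (j : ℤ)) * w⁻¹ * (va ^ 2)⁻¹)) (vt ^ 2) k *
          poch (-(vt ^ (2 - 2 * (j : ℤ)) * w⁻¹ * (vc ^ 2)⁻¹)) (vt ^ 2) k *
          poch (vt ^ (2 - 2 * (j : ℤ)) * (w ^ 2)⁻¹) (vt ^ 2) k *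
          poch (vt ^ (-(2 * (j : ℤ)))) (vt ^ 2) k) /
        (poch (vt ^ 2) (vt ^ 2) k * poch (-(vt ^ (1 - 2 * (j : ℤ)) * w⁻¹)) (vt ^ 2) k *
          poch (-(vt ^ (2 - 2 * (j : ℤ)) * w⁻¹)) (vt ^ 2) k *
          poch (vt ^ (5 - 4 * (j : ℤ)) * (w ^ 2)⁻¹ * (va ^ 2)⁻¹ * (vc ^ 2)⁻¹) (vt ^ 2) k)

/-- The function `f(w)`. -/
def f (w : K) : K :=
  ((1 - w⁻¹) * (1 - vt ^ 2 * w⁻¹ * (va ^ 2)⁻¹ * (vc ^ 2)⁻¹) * (1 + vt * w⁻¹ * (va ^ 2)⁻¹) *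
      (1 + vt * w⁻¹ * (vc ^ 2)⁻¹)) /
    ((1 - vt * (w ^ 2)⁻¹ * (va ^ 2)⁻¹ * (vc ^ 2)⁻¹) *
      (1 - vt ^ 3 * (w ^ 2)⁻¹ * (va ^ 2)⁻¹ * (vc ^ 2)⁻¹))

/-- The generalized binomial coefficient `binom(n,k) = n(n−1)⋯(n−k+1)/k!` with integer top. -/
def binomZ (n : ℤ) (k : ℕ) : ℚ := (∏ i ∈ range k, ((n : ℚ) - (i : ℚ))) / (k.factorial : ℚ)

/-- The coefficient `C_m(j) = Σ_{i=0}^{j} B(t^{m+1}, i) · binom(m+2j, j−i)`. -/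
def Cc (m : ℤ) (j : ℕ) : K :=
  ∑ i ∈ range (j + 1), B (vt ^ (m + 1)) i * (binomZ (m + 2 * j) (j - i) : ℚ)

/-- The Laurent polynomial ring `R = K[x₁^{±1},…,xₙ^{±1}]`. -/
abbrev R (n : ℕ) : Type := AddMonoidAlgebra K (Fin n →₀ ℤ)

/-- The invertible generator `xᵢ` of `R`. -/
def Xv {n : ℕ} (i : Fin n) : R n := AddMonoidAlgebra.single (Finsupp.single i 1) 1

/-- The element `xᵢ⁻¹` of `R`. -/
def Xinv {n : ℕ} (i : Fin n) : R n := AddMonoidAlgebra.single (Finsupp.single i (-1)) 1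

/-- `E_r(x) ∈ R`: the `r`-th elementary symmetric polynomial of the `2n` elements
`x₁,…,xₙ,x₁⁻¹,…,xₙ⁻¹`. -/
def E (n r : ℕ) : R n :=
  (Multiset.map Xv Finset.univ.val + Multiset.map Xinv Finset.univ.val).esymm r

/-- `m_{(1^s)}(x) ∈ R`: the type `Cₙ` one-column monomial symmetric polynomial
`Σ_{S ⊆ {1,…,n}, |S| = s} Σ_{ε : S → {±1}} ∏_{i ∈ S} xᵢ^{ε(i)}`
(encoded by the subset `P ⊆ S` of indices with `ε(i) = +1`). -/
def mcol (n s : ℕ) : R n :=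
  ∑ S ∈ Finset.univ.powersetCard s,
    ∑ P ∈ S.powerset, (∏ i ∈ P, Xv i) * ∏ i ∈ S \ P, Xinv i

/-!
Put `x̄ᵢ = xᵢ⁻¹`. Since `xᵢ x̄ᵢ = 1`, each pair of factors of `∏ᵢ (1 + xᵢ X)(1 + x̄ᵢ X)` multiplies
out to `(1 + X²) + (xᵢ + x̄ᵢ) X`. The coefficient of `X^r` in the product is `E_r`. Expanding the
second form instead gives `E_r = Σ_l binom(n - r + 2l, l) m_{(1^{r-2l})}`. Substitute this into the
left-hand side and collect the coefficient of `m_{(1^{r-2J})}`. That coefficient is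
`Σ_{i ≤ J} B(t^{n-r+1}, i) binom(n - r + 2J, J - i) = C_{n-r}(J)`.
-/

open Polynomial

lemma Xv_mul_Xinv {n : ℕ} (i : Fin n) : Xv i * Xinv i = 1 := by
  rw [Xv, Xinv, AddMonoidAlgebra.single_mul_single, ← Finsupp.single_add, add_neg_cancel,
    Finsupp.single_zero, mul_one]
  rfl

lemma binomZ_natCast (N k : ℕ) : binomZ N k = N.choose k := by
  rw [binomZ, Nat.cast_choose_eq_descPochhammer_div, descPochhammer_eval_eq_prod_range]
  push_cast
  rfl

lemma prod_C_mul_X_add {A ι : Type*} [CommSemiring A] (s : Finset ι) (h : ι → A) (b : A[X]) :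
    ∏ i ∈ s, (C (h i) * X + b) =
      ∑ k ∈ range (#s + 1), (∑ T ∈ s.powersetCard k, C (∏ i ∈ T, h i)) * X ^ k * b ^ (#s - k) := by
  classical
  rw [prod_add, powerset_card_biUnion, sum_biUnion (s.pairwise_disjoint_powersetCard.set_pairwise _)]
  refine sum_congr rfl fun k _ => ?_
  rw [sum_mul, sum_mul]
  refine sum_congr rfl fun T hT => ?_
  obtain ⟨hTs, hTc⟩ := mem_powersetCard.mp hT
  rw [prod_mul_distrib, prod_const, prod_const, map_prod, card_sdiff_of_subset hTs, hTc]

lemma E_eq_sum_powersetCard (n r : ℕ) :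
    E n r = ∑ T ∈ (univ : Finset (Fin n ⊕ Fin n)).powersetCard r, ∏ j ∈ T, Sum.elim Xv Xinv j := by
  rw [E, ← esymm_map_val, ← univ_disjSum_univ, val_disjSum, Multiset.disjSum, Multiset.map_add,
    Multiset.map_map, Multiset.map_map]
  rfl

lemma mcol_eq_sum_powersetCard (n s : ℕ) :
    mcol n s = ∑ S ∈ (univ : Finset (Fin n)).powersetCard s, ∏ i ∈ S, (Xv i + Xinv i) :=
  sum_congr rfl fun _ _ => (prod_add _ _ _).symm

lemma sum_C_E_mul_X_pow (n : ℕ) :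
    ∑ k ∈ range (n + n + 1), C (E n k) * X ^ k
      = ∑ s ∈ range (n + 1), C (mcol n s) * X ^ s * (1 + X ^ 2) ^ (n - s) := by
  have hfactor (i : Fin n) : (C (Xv i) * X + 1) * (C (Xinv i) * X + 1)
      = C (Xv i + Xinv i) * X + (1 + X ^ 2 : (R n)[X]) := by
    have hinv : C (Xv i) * C (Xinv i) = (1 : (R n)[X]) := by rw [← C_mul, Xv_mul_Xinv, C_1]
    calc (C (Xv i) * X + 1) * (C (Xinv i) * X + 1)
        = C (Xv i) * C (Xinv i) * X ^ 2 + (C (Xv i) + C (Xinv i)) * X + 1 := by ring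
      _ = _ := by rw [hinv, C_add]; ring
  calc ∑ k ∈ range (n + n + 1), C (E n k) * X ^ k
      = ∏ j : Fin n ⊕ Fin n, (C (Sum.elim Xv Xinv j) * X + 1) := by
        simp [prod_C_mul_X_add, E_eq_sum_powersetCard]
    _ = ∏ i : Fin n, (C (Xv i + Xinv i) * X + (1 + X ^ 2)) := by
        simp [Fintype.prod_sum_type, ← prod_mul_distrib, hfactor]
    _ = _ := by
        simp only [prod_C_mul_X_add, card_univ, Fintype.card_fin, mcol_eq_sum_powersetCard, map_sum]

lemma one_add_X_sq_pow {A : Type*} [CommSemiring A] (m : ℕ) :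
    (1 + X ^ 2 : A[X]) ^ m = ∑ j ∈ range (m + 1), C (m.choose j : A) * X ^ (2 * j) := by
  rw [add_comm, add_pow]
  refine sum_congr rfl fun j _ => ?_
  rw [one_pow, mul_one, pow_mul, map_natCast, mul_comm]

lemma sum_range_sum_range_ite_add_two_mul {M : Type*} [AddCommMonoid M] {n r : ℕ} (hr : r ≤ n)
    (F : ℕ → ℕ → M) :
    ∑ s ∈ range (n + 1), ∑ j ∈ range (n - s + 1), (if r = s + 2 * j then F s j else 0)
      = ∑ l ∈ range (r / 2 + 1), F (r - 2 * l) l := by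
  rw [sum_sigma', ← sum_filter]
  refine sum_nbij' (fun p => p.2) (fun l => ⟨r - 2 * l, l⟩) ?_ ?_ ?_ ?_ ?_ <;>
    simp only [mem_filter, mem_sigma, mem_range, Sigma.forall, Sigma.mk.injEq, heq_eq_eq, and_true,
      implies_true]
  iterate 3 (intros; omega)
  · rintro s j ⟨-, rfl⟩
    rw [Nat.add_sub_cancel]

lemma E_eq_sum_choose_smul_mcol {n r : ℕ} (hr : r ≤ n) :
    E n r = ∑ l ∈ range (r / 2 + 1), ((n - (r - 2 * l)).choose l : K) • mcol n (r - 2 * l) := by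
  have hcoeff := congrArg (coeff · r) (sum_C_E_mul_X_pow n)
  simp only [finsetSum_coeff, coeff_C_mul_X_pow] at hcoeff
  rw [sum_ite_eq, if_pos (mem_range.mpr (by omega))] at hcoeff
  have hterm (s : ℕ) : (C (mcol n s) * X ^ s * (1 + X ^ 2) ^ (n - s)).coeff r
      = ∑ j ∈ range (n - s + 1),
          if r = s + 2 * j then ((n - s).choose j : K) • mcol n s else 0 := by
    rw [one_add_X_sq_pow, mul_sum, finsetSum_coeff]
    refine sum_congr rfl fun j _ => ?_
    rw [Nat.cast_smul_eq_nsmul, nsmul_eq_mul, ← coeff_C_mul_X_pow, C_mul, pow_add]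
    exact congrArg (coeff · r) (by ring)
  rw [hcoeff, sum_congr rfl fun s _ => hterm s, sum_range_sum_range_ite_add_two_mul hr]

lemma sum_range_sum_range_half_sub {M : Type*} [AddCommMonoid M] (r : ℕ) (F : ℕ → ℕ → M) :
    ∑ j ∈ range (r / 2 + 1), ∑ l ∈ range ((r - 2 * j) / 2 + 1), F j l
      = ∑ J ∈ range (r / 2 + 1), ∑ i ∈ range (J + 1), F i (J - i) := by
  rw [sum_sigma', sum_sigma']
  refine sum_nbij' (fun p => ⟨p.1 + p.2, p.1⟩) (fun q => ⟨q.2, q.1 - q.2⟩) ?_ ?_ ?_ ?_ ?_ <;>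
    simp only [mem_sigma, mem_range, Sigma.forall, Sigma.mk.injEq, heq_eq_eq, add_tsub_cancel_left,
      and_true, implies_true] <;>
    (intros; omega)

lemma Cc_eq_sum_mul_choose {n r J : ℕ} (hr : r ≤ n) (hJ : 2 * J ≤ r) :
    Cc ((n : ℤ) - r) J
      = ∑ i ∈ range (J + 1), B (vt ^ (n - r + 1)) i * ((n - (r - 2 * J)).choose (J - i) : K) := by
  have hexp : (n : ℤ) - r + 1 = ((n - r + 1 : ℕ) : ℤ) := by omega
  have htop : (n : ℤ) - r + 2 * J = ((n - (r - 2 * J) : ℕ) : ℤ) := by omega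
  simp only [Cc, hexp, htop, zpow_natCast, binomZ_natCast, Rat.cast_natCast]

theorem koornwinder_monomial_expansion_general (n : ℕ) (r : ℕ) (hr : r ≤ n) :
    ∑ j ∈ range (r / 2 + 1), B (vt ^ (n - r + 1)) j • E n (r - 2 * j)
      = ∑ j ∈ range (r / 2 + 1), Cc ((n : ℤ) - (r : ℤ)) j • mcol n (r - 2 * j) := by
  set b := B (vt ^ (n - r + 1))
  have hexpand (j : ℕ) : b j • E n (r - 2 * j) = ∑ l ∈ range ((r - 2 * j) / 2 + 1),
      (b j * ((n - (r - 2 * j - 2 * l)).choose l : K)) • mcol n (r - 2 * j - 2 * l) := by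
    rw [E_eq_sum_choose_smul_mcol (by omega), smul_sum]
    simp only [smul_smul]
  simp only [hexpand, sum_range_sum_range_half_sub]
  refine sum_congr rfl fun J hJ => ?_
  rw [Cc_eq_sum_mul_choose hr (by rw [mem_range] at hJ; omega), sum_smul]
  refine sum_congr rfl fun i hi => ?_
  have hs : r - 2 * i - 2 * (J - i) = r - 2 * J := by rw [mem_range] at hi; omega
  rw [hs]

/-- The monomial expansion of the one-column Koornwinder polynomial
`P_{(1^r)}(x|a,−a,c,−c|q,t) = Σ_j B(t^{n−r+1},j) E_{r−2j}(x) = Σ_j C_{n−r}(j) m_{(1^{r−2j})}(x)`. -/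
theorem koornwinder_monomial_expansion (n : ℕ) (hn : 1 ≤ n) (r : ℕ) (hr : r ≤ n) :
    ∑ j ∈ range (r / 2 + 1), B (vt ^ (n - r + 1)) j • E n (r - 2 * j)
      = ∑ j ∈ range (r / 2 + 1), Cc ((n : ℤ) - (r : ℤ)) j • mcol n (r - 2 * j) :=
  koornwinder_monomial_expansion_general n r hr
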